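/- There is a constant C > 0 such that for every triangle-free finite simple graph G on n ≥ 3 vertices, (3·p_0(G) + p_1(G))·(1 − p_0(G) − p_1(G)) ≥ (1 − p_0(G))² − C/n. -/

import Mathlib

open Finset

open scoped Classical

/-- The induced density `d(H;G)`: the probability that a uniformly random
`|V(H)|`-element subset of `V(G)` induces a subgraph isomorphic to `H`. -/
noncomputable def inducedDensity {W V : Type*} [Fintype W] [Fintype V] [DecidableEq V]
    (H : SimpleGraph W) (G : SimpleGraph V) : ℝ :=
  (((univ : Finset V).powersetCard (Fintype.card W)).filter
      (fun S => Nonempty (H ≃g G.induce (S : Set V)))).card /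
    ((univ : Finset V).powersetCard (Fintype.card W)).card

/-- The number of edges of `G` spanned by the vertex set `S`. -/
noncomputable def edgesIn {V : Type*} [Fintype V] [DecidableEq V]
    (G : SimpleGraph V) (S : Finset V) : ℕ :=
  ((S.powersetCard 2).filter (fun T => ∀ x ∈ T, ∀ y ∈ T, x ≠ y → G.Adj x y)).card

/-- `localProfile G i = p_i(G)`: the probability that a uniformly random 3-element
subset of `V(G)` spans exactly `i` edges. -/
noncomputable def localProfile {V : Type*} [Fintype V] [DecidableEq V]
    (G : SimpleGraph V) (i : ℕ) : ℝ :=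
  (((univ : Finset V).powersetCard 3).filter (fun S => edgesIn G S = i)).card /
    ((univ : Finset V).powersetCard 3).card

namespace TFQC

open SimpleGraph

variable {V : Type*} [Fintype V] [DecidableEq V]

/-- The set of edges of `G`, as `2`-element subsets of `V`. -/
noncomputable def ES (G : SimpleGraph V) : Finset (Finset V) :=
  ((univ : Finset V).powersetCard 2).filter
    (fun T => ∀ x ∈ T, ∀ y ∈ T, x ≠ y → G.Adj x y)

lemma mem_ES {G : SimpleGraph V} {T : Finset V} :
    T ∈ ES G ↔ T.card = 2 ∧ ∀ x ∈ T, ∀ y ∈ T, x ≠ y → G.Adj x y := by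
  simp [ES, mem_powersetCard, subset_univ]

lemma pair_mem_ES {G : SimpleGraph V} {x y : V} (h : G.Adj x y) :
    ({x, y} : Finset V) ∈ ES G := by
  refine mem_ES.2 ⟨card_pair h.ne, ?_⟩
  intro a ha b hb hab
  simp only [mem_insert, mem_singleton] at ha hb
  rcases ha with rfl | rfl <;> rcases hb with rfl | rfl
  · exact absurd rfl hab
  · exact h
  · exact h.symm
  · exact absurd rfl hab

lemma adj_of_pair_mem_ES {G : SimpleGraph V} {x y : V} (hxy : x ≠ y)
    (h : ({x, y} : Finset V) ∈ ES G) : G.Adj x y :=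
  (mem_ES.1 h).2 x (by simp) y (by simp) hxy

lemma edgesIn_eq_card_filter (G : SimpleGraph V) (S : Finset V) :
    edgesIn G S = ((ES G).filter (· ⊆ S)).card := by
  unfold edgesIn ES
  congr 1
  ext T
  simp only [mem_filter, mem_powersetCard, subset_univ, true_and]
  tauto

lemma card_supersets {T : Finset V} (hT : T.card = 2) :
    (((univ : Finset V).powersetCard 3).filter (fun S => T ⊆ S)).card
      = Fintype.card V - 2 := by
  have key : (((univ : Finset V).powersetCard 3).filter (fun S => T ⊆ S)).card
      = (((univ : Finset V) \ T).powersetCard 1).card := by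
    refine card_bij' (fun S _ => S \ T) (fun P _ => P ∪ T) ?_ ?_ ?_ ?_
    · intro S hS
      simp only [mem_filter, mem_powersetCard] at hS
      obtain ⟨⟨_, hc⟩, hTS⟩ := hS
      refine mem_powersetCard.2 ⟨sdiff_subset_sdiff (subset_univ S) le_rfl, ?_⟩
      rw [card_sdiff_of_subset hTS, hc, hT]
    · intro P hP
      rw [mem_powersetCard] at hP
      obtain ⟨hsub, hc⟩ := hP
      have hd : Disjoint P T := disjoint_of_subset_left hsub sdiff_disjoint
      refine mem_filter.2 ⟨mem_powersetCard.2 ⟨subset_univ _, ?_⟩, subset_union_right⟩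
      rw [card_union_of_disjoint hd, hc, hT]
    · intro S hS
      exact sdiff_union_of_subset (mem_filter.1 hS).2
    · intro P hP
      rw [mem_powersetCard] at hP
      exact union_sdiff_cancel_right (disjoint_of_subset_left hP.1 sdiff_disjoint)
  rw [key, card_powersetCard, Nat.choose_one_right, card_sdiff_of_subset (subset_univ T), hT, card_univ]

lemma sum_edgesIn (G : SimpleGraph V) :
    ∑ S ∈ (univ : Finset V).powersetCard 3, edgesIn G S
      = (ES G).card * (Fintype.card V - 2) := by
  calc ∑ S ∈ (univ : Finset V).powersetCard 3, edgesIn G S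
      = ∑ S ∈ (univ : Finset V).powersetCard 3, ∑ T ∈ ES G, if T ⊆ S then 1 else 0 := by
        refine sum_congr rfl fun S _ => ?_
        rw [edgesIn_eq_card_filter, card_filter]
    _ = ∑ T ∈ ES G, ∑ S ∈ (univ : Finset V).powersetCard 3, if T ⊆ S then 1 else 0 :=
        sum_comm
    _ = ∑ _T ∈ ES G, (Fintype.card V - 2) := by
        refine sum_congr rfl fun T hT => ?_
        rw [← card_filter]
        exact card_supersets (mem_ES.1 hT).1
    _ = (ES G).card * (Fintype.card V - 2) := by rw [sum_const, smul_eq_mul]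

lemma not_adj_of_cherry {G : SimpleGraph V} (hG : G.CliqueFree 3) {v u w : V}
    (hvu : G.Adj v u) (hvw : G.Adj v w) : ¬ G.Adj u w :=
  fun h => hG {v, u, w} (is3Clique_triple_iff.2 ⟨hvu, hvw, h⟩)

lemma edgesIn_le_two {G : SimpleGraph V} (hG : G.CliqueFree 3) {S : Finset V}
    (hS : S.card = 3) : edgesIn G S ≤ 2 := by
  have hcard : (S.powersetCard 2).card = 3 := by
    rw [card_powersetCard, hS]
    decide
  have hle : edgesIn G S ≤ 3 := by
    rw [← hcard]
    exact card_le_card (filter_subset _ _)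
  rcases Nat.lt_or_ge (edgesIn G S) 3 with h | h
  · omega
  exfalso
  have h3 : (S.powersetCard 2).card ≤ edgesIn G S := by omega
  have heqf := eq_of_subset_of_card_le (filter_subset
      (fun T => ∀ x ∈ T, ∀ y ∈ T, x ≠ y → G.Adj x y) (S.powersetCard 2)) h3
  have heq' : S.powersetCard 2
      ⊆ (S.powersetCard 2).filter (fun T => ∀ x ∈ T, ∀ y ∈ T, x ≠ y → G.Adj x y) := by
    intro T hT
    rw [heqf]
    exact hT
  have key : ∀ x ∈ S, ∀ y ∈ S, x ≠ y → G.Adj x y := by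
    intro x hx y hy hxy
    have hT : ({x, y} : Finset V) ∈ S.powersetCard 2 :=
      mem_powersetCard.2 ⟨by simp [insert_subset_iff, hx, hy], card_pair hxy⟩
    exact (mem_filter.1 (heq' hT)).2 x (by simp) y (by simp) hxy
  exact hG S ⟨fun x hx y hy hxy => key x hx y hy hxy, hS⟩

lemma edgesIn_cherry {G : SimpleGraph V} (hG : G.CliqueFree 3) {v u w : V}
    (hvu : G.Adj v u) (hvw : G.Adj v w) (huw : u ≠ w) :
    edgesIn G {v, u, w} = 2 := by
  rw [edgesIn_eq_card_filter]
  have hset : (ES G).filter (· ⊆ ({v, u, w} : Finset V)) = {({v, u} : Finset V), {v, w}} := by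
    ext T
    simp only [mem_filter, mem_insert, mem_singleton]
    constructor
    · rintro ⟨hTE, hTS⟩
      obtain ⟨hc2, _⟩ := mem_ES.1 hTE
      obtain ⟨x, y, hxy, rfl⟩ := card_eq_two.1 hc2
      have hadjxy : G.Adj x y := adj_of_pair_mem_ES hxy hTE
      have hx : x ∈ ({v, u, w} : Finset V) := hTS (by simp)
      have hy : y ∈ ({v, u, w} : Finset V) := hTS (by simp)
      simp only [mem_insert, mem_singleton] at hx hy
      rcases hx with rfl | rfl | rfl <;> rcases hy with rfl | rfl | rfl
      · exact absurd rfl hxy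
      · left; rfl
      · right; rfl
      · left; exact pair_comm _ _
      · exact absurd rfl hxy
      · exact absurd hadjxy (not_adj_of_cherry hG hvu hvw)
      · right; exact pair_comm _ _
      · exact absurd hadjxy.symm (not_adj_of_cherry hG hvu hvw)
      · exact absurd rfl hxy
    · rintro (rfl | rfl)
      · exact ⟨pair_mem_ES hvu, by simp [insert_subset_iff]⟩
      · exact ⟨pair_mem_ES hvw, by simp [insert_subset_iff]⟩
  rw [hset]
  have hne : ({v, u} : Finset V) ≠ {v, w} := by
    intro h
    have : u ∈ ({v, w} : Finset V) := h ▸ (by simp)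
    simp only [mem_insert, mem_singleton] at this
    rcases this with rfl | rfl
    · exact hvu.ne' rfl
    · exact huw rfl
  exact card_pair hne

lemma N2_eq_cherries {G : SimpleGraph V} (hG : G.CliqueFree 3) :
    (((univ : Finset V).powersetCard 3).filter (fun S => edgesIn G S = 2)).card
      = ∑ v : V, ((G.neighborFinset v).powersetCard 2).card := by
  rw [← card_sigma]
  refine (card_bij (fun (a : (_ : V) × Finset V) _ => insert a.1 a.2) ?_ ?_ ?_).symm
  · rintro ⟨v, P⟩ ha
    simp only [mem_sigma, mem_univ, true_and, mem_powersetCard] at ha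
    obtain ⟨hPN, hP2⟩ := ha
    obtain ⟨x, y, hxy, rfl⟩ := card_eq_two.1 hP2
    have hvx : G.Adj v x := mem_neighborFinset _ _ _ |>.1 (hPN (by simp))
    have hvy : G.Adj v y := mem_neighborFinset _ _ _ |>.1 (hPN (by simp))
    refine mem_filter.2 ⟨mem_powersetCard.2 ⟨subset_univ _, ?_⟩, ?_⟩
    · rw [card_insert_of_notMem, card_pair hxy]
      simp only [mem_insert, mem_singleton]
      rintro (rfl | rfl)
      · exact hvx.ne rfl
      · exact hvy.ne rfl
    · exact edgesIn_cherry hG hvx hvy hxy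
  · rintro ⟨v, P⟩ ha ⟨v', P'⟩ ha' heq
    simp only at heq
    simp only [mem_sigma, mem_univ, true_and, mem_powersetCard] at ha ha'
    obtain ⟨hPN, hP2⟩ := ha
    obtain ⟨hPN', hP2'⟩ := ha'
    have hvP : v ∉ P := fun h => (G.irrefl (mem_neighborFinset _ _ _ |>.1 (hPN h)))
    have hvP' : v' ∉ P' := fun h => (G.irrefl (mem_neighborFinset _ _ _ |>.1 (hPN' h)))
    have hvv : v = v' := by
      by_contra hvv
      have hv1 : v ∈ insert v' P' := heq ▸ mem_insert_self v P
      have hv2 : v' ∈ insert v P := heq ▸ mem_insert_self v' P'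
      rw [mem_insert] at hv1 hv2
      have hvmem : v ∈ P' := hv1.resolve_left hvv
      have hvmem' : v' ∈ P := hv2.resolve_left (Ne.symm hvv)
      have hadj1 : G.Adj v' v := mem_neighborFinset _ _ _ |>.1 (hPN' hvmem)
      obtain ⟨x, y, hxy, rfl⟩ := card_eq_two.1 hP2
      have hvx : G.Adj v x := mem_neighborFinset _ _ _ |>.1 (hPN (by simp))
      have hvy : G.Adj v y := mem_neighborFinset _ _ _ |>.1 (hPN (by simp))
      simp only [mem_insert, mem_singleton] at hvmem'
      -- the other element of P is adjacent to both v and v'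
      rcases hvmem' with rfl | rfl
      · -- v' = x, other element y
        have hy : y ∈ insert v' P' := by
          rw [← heq]; simp
        rw [mem_insert] at hy
        have hyP' : y ∈ P' := hy.resolve_left (fun h => hxy h.symm)
        have : G.Adj v' y := mem_neighborFinset _ _ _ |>.1 (hPN' hyP')
        exact hG {v, v', y} (is3Clique_triple_iff.2 ⟨hvx, hvy, this⟩)
      · -- v' = y, other element x
        have hx : x ∈ insert v' P' := by
          rw [← heq]; simp
        rw [mem_insert] at hx
        have hxP' : x ∈ P' := hx.resolve_left hxy
        have : G.Adj v' x := mem_neighborFinset _ _ _ |>.1 (hPN' hxP')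
        exact hG {v, v', x} (is3Clique_triple_iff.2 ⟨hvy, hvx, this⟩)
    subst hvv
    have hPP : P = P' := by
      have := congrArg (fun s => Finset.erase s v) heq
      simpa [erase_insert hvP, erase_insert hvP'] using this
    subst hPP
    rfl
  · intro S hS
    simp only [mem_filter, mem_powersetCard] at hS
    obtain ⟨⟨_, hS3⟩, hS2⟩ := hS
    obtain ⟨a, b, c, hab, hac, hbc, rfl⟩ := card_eq_three.1 hS3
    have hfil : ((ES G).filter (· ⊆ ({a, b, c} : Finset V))).card = 2 := by
      rw [← edgesIn_eq_card_filter]; exact hS2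
    obtain ⟨T₁, T₂, hT12, hfe⟩ := card_eq_two.1 hfil
    have hmemT : ∀ T ∈ (ES G).filter (· ⊆ ({a, b, c} : Finset V)),
        T = ({a, b} : Finset V) ∨ T = {a, c} ∨ T = {b, c} := by
      rintro T hT
      obtain ⟨hTE, hTS⟩ := mem_filter.1 hT
      obtain ⟨hc2, _⟩ := mem_ES.1 hTE
      obtain ⟨x, y, hxy, rfl⟩ := card_eq_two.1 hc2
      have hx : x ∈ ({a, b, c} : Finset V) := hTS (by simp)
      have hy : y ∈ ({a, b, c} : Finset V) := hTS (by simp)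
      simp only [mem_insert, mem_singleton] at hx hy
      rcases hx with rfl | rfl | rfl <;> rcases hy with rfl | rfl | rfl
      · exact absurd rfl hxy
      · left; rfl
      · right; left; rfl
      · left; exact pair_comm _ _
      · exact absurd rfl hxy
      · right; right; rfl
      · right; left; exact pair_comm _ _
      · right; right; exact pair_comm _ _
      · exact absurd rfl hxy
    have hT₁m : T₁ ∈ (ES G).filter (· ⊆ ({a, b, c} : Finset V)) := by rw [hfe]; simp
    have hT₂m : T₂ ∈ (ES G).filter (· ⊆ ({a, b, c} : Finset V)) := by rw [hfe]; simp
    have hT₁E : T₁ ∈ ES G := (mem_filter.1 hT₁m).1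
    have hT₂E : T₂ ∈ ES G := (mem_filter.1 hT₂m).1
    have hadj : ∀ x y : V, x ≠ y → ({x, y} : Finset V) = T₁ ∨ ({x, y} : Finset V) = T₂ →
        G.Adj x y := by
      rintro x y hxy (rfl | rfl)
      · exact adj_of_pair_mem_ES hxy hT₁E
      · exact adj_of_pair_mem_ES hxy hT₂E
    -- helper to build the witness
    have build : ∀ v x y : V, G.Adj v x → G.Adj v y → x ≠ y →
        insert v ({x, y} : Finset V) = ({a, b, c} : Finset V) →
        ∃ p, ∃ (H : p ∈ (univ : Finset V).sigma
            (fun v => (G.neighborFinset v).powersetCard 2)),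
          insert (Sigma.fst p) (Sigma.snd p) = ({a, b, c} : Finset V) := by
      intro v x y hvx hvy hxy hins
      refine ⟨⟨v, {x, y}⟩, ?_, hins⟩
      simp only [mem_sigma, mem_univ, true_and, mem_powersetCard]
      refine ⟨?_, card_pair hxy⟩
      intro z hz
      simp only [mem_insert, mem_singleton] at hz
      rcases hz with rfl | rfl
      · exact (mem_neighborFinset _ _ _).2 hvx
      · exact (mem_neighborFinset _ _ _).2 hvy
    rcases hmemT T₁ hT₁m with h1 | h1 | h1 <;> rcases hmemT T₂ hT₂m with h2 | h2 | h2
    · exact absurd (h1.trans h2.symm) hT12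
    · -- T₁ = {a,b}, T₂ = {a,c} : center a
      refine build a b c (hadj a b hab (Or.inl h1.symm)) (hadj a c hac (Or.inr h2.symm)) hbc rfl
    · -- T₁ = {a,b}, T₂ = {b,c} : center b
      refine build b a c ((hadj a b hab (Or.inl h1.symm)).symm)
        (hadj b c hbc (Or.inr h2.symm)) hac ?_
      ext z; simp only [mem_insert, mem_singleton]; tauto
    · -- T₁ = {a,c}, T₂ = {a,b} : center a
      refine build a b c (hadj a b hab (Or.inr h2.symm)) (hadj a c hac (Or.inl h1.symm)) hbc rfl
    · exact absurd (h1.trans h2.symm) hT12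
    · -- T₁ = {a,c}, T₂ = {b,c} : center c
      refine build c a b ((hadj a c hac (Or.inl h1.symm)).symm)
        ((hadj b c hbc (Or.inr h2.symm)).symm) hab ?_
      ext z; simp only [mem_insert, mem_singleton]; tauto
    · -- T₁ = {b,c}, T₂ = {a,b} : center b
      refine build b a c ((hadj a b hab (Or.inr h2.symm)).symm)
        (hadj b c hbc (Or.inl h1.symm)) hac ?_
      ext z; simp only [mem_insert, mem_singleton]; tauto
    · -- T₁ = {b,c}, T₂ = {a,c} : center c
      refine build c a b ((hadj a c hac (Or.inr h2.symm)).symm)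
        ((hadj b c hbc (Or.inl h1.symm)).symm) hab ?_
      ext z; simp only [mem_insert, mem_singleton]; tauto
    · exact absurd (h1.trans h2.symm) hT12

lemma degree_eq_card_filter (G : SimpleGraph V) (v : V) :
    ((ES G).filter (fun T => v ∈ T)).card = G.degree v := by
  rw [← SimpleGraph.card_neighborFinset_eq_degree]
  refine (card_bij (fun u _ => ({v, u} : Finset V)) ?_ ?_ ?_).symm
  · intro u hu
    refine mem_filter.2 ⟨pair_mem_ES ((SimpleGraph.mem_neighborFinset _ _ _).1 hu), by simp⟩
  · intro u₁ h₁ u₂ h₂ heq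
    have hu₁ : u₁ ≠ v := ((SimpleGraph.mem_neighborFinset _ _ _).1 h₁).ne'
    have : u₁ ∈ ({v, u₂} : Finset V) := heq ▸ (by simp)
    simp only [mem_insert, mem_singleton] at this
    exact this.resolve_left hu₁
  · intro T hT
    obtain ⟨hTE, hvT⟩ := mem_filter.1 hT
    obtain ⟨x, y, hxy, rfl⟩ := card_eq_two.1 (mem_ES.1 hTE).1
    have hadj : G.Adj x y := adj_of_pair_mem_ES hxy hTE
    simp only [mem_insert, mem_singleton] at hvT
    rcases hvT with rfl | rfl
    · exact ⟨y, (SimpleGraph.mem_neighborFinset _ _ _).2 hadj, rfl⟩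
    · exact ⟨x, (SimpleGraph.mem_neighborFinset _ _ _).2 hadj.symm, pair_comm _ _⟩

lemma handshake (G : SimpleGraph V) : ∑ v : V, G.degree v = 2 * (ES G).card := by
  calc ∑ v : V, G.degree v
      = ∑ v : V, ((ES G).filter (fun T => v ∈ T)).card :=
        sum_congr rfl fun v _ => (degree_eq_card_filter G v).symm
    _ = ∑ v : V, ∑ T ∈ ES G, if v ∈ T then 1 else 0 :=
        sum_congr rfl fun v _ => card_filter _ _
    _ = ∑ T ∈ ES G, ∑ v : V, if v ∈ T then 1 else 0 := sum_comm
    _ = ∑ T ∈ ES G, T.card := by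
        refine sum_congr rfl fun T hT => ?_
        rw [← card_filter, filter_univ_mem]
    _ = ∑ _T ∈ ES G, 2 := sum_congr rfl fun T hT => (mem_ES.1 hT).1
    _ = 2 * (ES G).card := by rw [sum_const, smul_eq_mul, mul_comm]

lemma ES_card_le (G : SimpleGraph V) :
    (ES G).card ≤ (Fintype.card V).choose 2 := by
  calc (ES G).card ≤ ((univ : Finset V).powersetCard 2).card :=
        card_le_card (filter_subset _ _)
    _ = (Fintype.card V).choose 2 := by rw [card_powersetCard, card_univ]


lemma partition_count {G : SimpleGraph V} (hG : G.CliqueFree 3) :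
    ((((univ : Finset V).powersetCard 3).filter (fun S => edgesIn G S = 0)).card
      + (((univ : Finset V).powersetCard 3).filter (fun S => edgesIn G S = 1)).card)
      + (((univ : Finset V).powersetCard 3).filter (fun S => edgesIn G S = 2)).card
      = ((univ : Finset V).powersetCard 3).card ∧
    (((univ : Finset V).powersetCard 3).filter (fun S => edgesIn G S = 1)).card
      + 2 * (((univ : Finset V).powersetCard 3).filter (fun S => edgesIn G S = 2)).card
      = (ES G).card * (Fintype.card V - 2) := by
  set Ω := (univ : Finset V).powersetCard 3 with hΩ
  have hmem : ∀ S ∈ Ω, (edgesIn G S = 0 ∨ edgesIn G S = 1) ∨ edgesIn G S = 2 := by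
    intro S hS
    have := edgesIn_le_two hG (mem_powersetCard.1 hS).2
    omega
  have d01 : Disjoint (Ω.filter (fun S => edgesIn G S = 0))
      (Ω.filter (fun S => edgesIn G S = 1)) := by
    rw [Finset.disjoint_left]
    intro S h0 h1
    have e0 := (mem_filter.1 h0).2
    have e1 := (mem_filter.1 h1).2
    omega
  have d2 : Disjoint (Ω.filter (fun S => edgesIn G S = 0) ∪ Ω.filter (fun S => edgesIn G S = 1))
      (Ω.filter (fun S => edgesIn G S = 2)) := by
    rw [Finset.disjoint_left]
    intro S h0 h2
    have e2 := (mem_filter.1 h2).2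
    rcases mem_union.1 h0 with h | h
    · have := (mem_filter.1 h).2; omega
    · have := (mem_filter.1 h).2; omega
  have hcover : Ω = (Ω.filter (fun S => edgesIn G S = 0) ∪ Ω.filter (fun S => edgesIn G S = 1))
      ∪ Ω.filter (fun S => edgesIn G S = 2) := by
    rw [← filter_or, ← filter_or]
    exact (filter_true_of_mem hmem).symm
  constructor
  · conv_rhs => rw [hcover]
    rw [card_union_of_disjoint d2, card_union_of_disjoint d01]
  · have hsum : ∑ S ∈ Ω, edgesIn G S = (ES G).card * (Fintype.card V - 2) := sum_edgesIn G
    rw [hcover, sum_union d2, sum_union d01] at hsum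
    have h0 : ∑ S ∈ Ω.filter (fun S => edgesIn G S = 0), edgesIn G S = 0 :=
      sum_eq_zero fun S hS => (mem_filter.1 hS).2
    have h1 : ∑ S ∈ Ω.filter (fun S => edgesIn G S = 1), edgesIn G S
        = (Ω.filter (fun S => edgesIn G S = 1)).card := by
      rw [sum_congr rfl fun S hS => (mem_filter.1 hS).2, sum_const, smul_eq_mul, mul_one]
    have h2 : ∑ S ∈ Ω.filter (fun S => edgesIn G S = 2), edgesIn G S
        = 2 * (Ω.filter (fun S => edgesIn G S = 2)).card := by
      rw [sum_congr rfl fun S hS => (mem_filter.1 hS).2, sum_const, smul_eq_mul, mul_comm]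
    rw [h0, h1, h2] at hsum
    omega

end TFQC

set_option maxHeartbeats 1000000 in
/-- There is a constant `C > 0` such that every triangle-free graph `G` on `n ≥ 3` vertices
satisfies `(3p₀(G)+p₁(G))(1-p₀(G)-p₁(G)) ≥ (1-p₀(G))² - C/n`. -/
theorem triangle_free_quadratic_constraint :
    ∃ C : ℝ, 0 < C ∧ ∀ n : ℕ, 3 ≤ n → ∀ G : SimpleGraph (Fin n), G.CliqueFree 3 →
      (3 * localProfile G 0 + localProfile G 1) *
          (1 - localProfile G 0 - localProfile G 1) ≥
        (1 - localProfile G 0) ^ 2 - C / n := by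
  refine ⟨27, by norm_num, ?_⟩
  intro n hn G hG
  have hΩcard : (((univ : Finset (Fin n)).powersetCard 3).card : ℝ) = (n.choose 3 : ℝ) := by
    rw [card_powersetCard, card_univ, Fintype.card_fin]
  obtain ⟨hpart, hcount⟩ := TFQC.partition_count (V := Fin n) hG
  rw [Fintype.card_fin] at hcount
  have hN2cherry := TFQC.N2_eq_cherries (V := Fin n) hG
  have hhand := TFQC.handshake G
  have hmle := TFQC.ES_card_le G
  rw [Fintype.card_fin] at hmle
  set nr : ℝ := (n : ℝ) with hnrdef
  have hnr3 : (3 : ℝ) ≤ nr := by rw [hnrdef]; exact_mod_cast hn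
  have hnrpos : (0 : ℝ) < nr := by linarith
  set Nr : ℝ := (n.choose 3 : ℝ) with hNrdef
  have hNrpos : (0 : ℝ) < Nr := by
    rw [hNrdef]
    exact_mod_cast Nat.choose_pos hn
  set N0 := (((univ : Finset (Fin n)).powersetCard 3).filter (fun S => edgesIn G S = 0)).card
    with hN0def
  set N1 := (((univ : Finset (Fin n)).powersetCard 3).filter (fun S => edgesIn G S = 1)).card
    with hN1def
  set N2 := (((univ : Finset (Fin n)).powersetCard 3).filter (fun S => edgesIn G S = 2)).card
    with hN2def
  set M : ℝ := ((TFQC.ES G).card : ℝ) with hMdef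
  have hM0 : (0 : ℝ) ≤ M := Nat.cast_nonneg _
  -- real versions of the counting identities
  have hpartR : (N0 : ℝ) + (N1 : ℝ) + (N2 : ℝ) = Nr := by
    rw [← hΩcard]
    exact_mod_cast hpart
  have h2n : 2 ≤ n := by omega
  have hcountR : (N1 : ℝ) + 2 * (N2 : ℝ) = M * (nr - 2) := by
    rw [hMdef, hnrdef]
    have hc := congrArg (Nat.cast : ℕ → ℝ) hcount
    push_cast [Nat.cast_sub h2n] at hc
    linarith [hc]
  -- handshake and degree sums
  have hDsum : ∑ v : Fin n, (G.degree v : ℝ) = 2 * M := by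
    rw [hMdef]
    have hc := congrArg (Nat.cast : ℕ → ℝ) hhand
    push_cast at hc
    linarith [hc]
  have hN2nat : N2 = ∑ v : Fin n, (G.degree v).choose 2 := by
    rw [hN2cherry]
    exact sum_congr rfl fun v _ => by rw [card_powersetCard]; rfl
  have h2N2 : 2 * (N2 : ℝ) = ∑ v : Fin n, (G.degree v : ℝ) ^ 2
      - ∑ v : Fin n, (G.degree v : ℝ) := by
    have hc := congrArg (Nat.cast : ℕ → ℝ) hN2nat
    push_cast [Nat.cast_choose_two] at hc
    rw [hc, ← sum_sub_distrib, mul_sum]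
    exact sum_congr rfl fun v _ => by ring
  have hcs : (∑ v : Fin n, (G.degree v : ℝ)) ^ 2 ≤ nr * ∑ v : Fin n, (G.degree v : ℝ) ^ 2 := by
    rw [hnrdef]
    have h := sq_sum_le_card_mul_sum_sq (s := (univ : Finset (Fin n)))
      (f := fun v => (G.degree v : ℝ))
    simpa [card_univ] using h
  have hA : ∑ v : Fin n, (G.degree v : ℝ) ^ 2 = 2 * (N2 : ℝ) + 2 * M := by
    rw [h2N2, hDsum]; ring
  have hf1 : 4 * M ^ 2 ≤ nr * (2 * (N2 : ℝ) + 2 * M) := by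
    calc 4 * M ^ 2 = (2 * M) ^ 2 := by ring
      _ = (∑ v : Fin n, (G.degree v : ℝ)) ^ 2 := by rw [hDsum]
      _ ≤ nr * ∑ v : Fin n, (G.degree v : ℝ) ^ 2 := hcs
      _ = nr * (2 * (N2 : ℝ) + 2 * M) := by rw [hA]
  have hMle : 2 * M ≤ nr * (nr - 1) := by
    rw [hMdef, hnrdef]
    have h := (Nat.cast_le (α := ℝ)).2 hmle
    rw [Nat.cast_choose_two] at h
    linarith [h]
  have hNr6 : 6 * Nr = nr * (nr - 1) * (nr - 2) := by
    have hchoose : n * (n - 1) * (n - 2) = 6 * n.choose 3 := by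
      have h1 := Nat.descFactorial_eq_factorial_mul_choose n 3
      have hd : n.descFactorial 3 = (n - 2) * ((n - 1) * ((n - 0) * 1)) := rfl
      rw [hd, Nat.sub_zero, mul_one] at h1
      rw [show Nat.factorial 3 = 6 from rfl] at h1
      calc n * (n - 1) * (n - 2) = (n - 2) * ((n - 1) * n) := by ring
        _ = 6 * n.choose 3 := h1
    have hc := congrArg (Nat.cast : ℕ → ℝ) hchoose
    push_cast [Nat.cast_sub (by omega : 1 ≤ n), Nat.cast_sub h2n] at hc
    rw [hNrdef, hnrdef]
    push_cast
    linarith [hc]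
  -- the main cleared inequality
  have t1 : 2 * M * nr ≤ nr * (nr - 1) * nr := mul_le_mul_of_nonneg_right hMle hnrpos.le
  have t2 : (0 : ℝ) ≤ nr * (nr - 1) * (2 * nr - 6) := by
    apply mul_nonneg
    apply mul_nonneg <;> linarith
    linarith
  have e2 : M * nr ≤ 9 * Nr := by linarith [t1, t2, hNr6]
  have h15 : 6 * M ^ 2 - 3 * M * nr ≤ 3 * (N2 : ℝ) * nr := by linarith [hf1]
  have e1 : (6 * M ^ 2 - 3 * M * nr) * Nr ^ 2 ≤ 3 * (N2 : ℝ) * nr * Nr ^ 2 :=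
    mul_le_mul_of_nonneg_right h15 (sq_nonneg Nr)
  have e2m : 3 * Nr ^ 2 * (M * nr) ≤ 3 * Nr ^ 2 * (9 * Nr) :=
    mul_le_mul_of_nonneg_left e2 (by positivity)
  have g1 : 6 * M ^ 2 * Nr ^ 2 = M ^ 2 * Nr * (nr * (nr - 1) * (nr - 2)) := by
    rw [← hNr6]; ring
  have g2 : M ^ 2 * Nr * (nr * (nr - 2) * (nr - 2)) ≤ M ^ 2 * Nr * (nr * (nr - 1) * (nr - 2)) := by
    apply mul_le_mul_of_nonneg_left _ (mul_nonneg (sq_nonneg M) hNrpos.le : (0 : ℝ) ≤ M ^ 2 * Nr)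
    have hnn : (0 : ℝ) ≤ nr * (nr - 2) := mul_nonneg (by linarith) (by linarith)
    have hexp : nr * (nr - 1) * (nr - 2) - nr * (nr - 2) * (nr - 2) = nr * (nr - 2) := by ring
    linarith [hnn, hexp]
  have main : (M * (nr - 2)) ^ 2 * (Nr * nr) ≤ (3 * (N2 : ℝ) * nr + 27 * Nr) * Nr ^ 2 := by
    linarith [e1, e2m, g1, g2]
  -- express the local profile values
  have hp0 : localProfile G 0 = (N0 : ℝ) / Nr := by
    simp only [localProfile]
    rw [hΩcard, ← hN0def]
  have hp1 : localProfile G 1 = (N1 : ℝ) / Nr := by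
    simp only [localProfile]
    rw [hΩcard, ← hN1def]
  rw [hp0, hp1]
  set q0 : ℝ := (N0 : ℝ) / Nr with hq0def
  set q1 : ℝ := (N1 : ℝ) / Nr with hq1def
  set q2 : ℝ := (N2 : ℝ) / Nr with hq2def
  have hsum0 : q0 + q1 + q2 = 1 := by
    have hone : ((N0 : ℝ) + (N1 : ℝ) + (N2 : ℝ)) / Nr = 1 := by
      rw [hpartR]
      exact div_self hNrpos.ne'
    rw [hq0def, hq1def, hq2def, ← hone]
    ring
  have ht : q1 + 2 * q2 = M * (nr - 2) / Nr := by
    rw [hq1def, hq2def, ← hcountR]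
    ring
  have key : (q1 + 2 * q2) ^ 2 ≤ 3 * q2 + 27 / nr := by
    rw [ht, hq2def]
    have hrhs : 3 * ((N2 : ℝ) / Nr) + 27 / nr = (3 * (N2 : ℝ) * nr + 27 * Nr) / (Nr * nr) := by
      field_simp
    rw [hrhs, div_pow, div_le_div_iff₀ (by positivity) (by positivity)]
    exact main
  have hq0 : q0 = 1 - q1 - q2 := by linarith [hsum0]
  rw [hq0]
  have hexpand : (3 * (1 - q1 - q2) + q1) * (1 - (1 - q1 - q2) - q1)
      - ((1 - (1 - q1 - q2)) ^ 2 - 27 / nr)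
      = 3 * q2 + 27 / nr - (q1 + 2 * q2) ^ 2 := by ring
  linarith [key, hexpand]
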